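/- arXiv:2210.04374 — 2 statements merged into one kernel-verified Lean document; each statement's English description precedes it below -/
import Mathlib

section
/- Let X be a normed plane satisfying the second non-uniqueness condition: there exist unit vectors x₁, x₂ of the first type and a unit vector x₃ of the zero type, together with norming functionals φ₁, φ₂, φ₃ for x₁, x₂, x₃ such that φ₁ + φ₂ + φ₃ = 0 and x₃ is the only unit vector y with φ₃(y) = 1. Then there exist three points y₁, y₂, y₃ in X such that ft(y₁, y₂, y₃) is a non-degenerate segment, i.e., equals the closed segment [a, b] for some a ≠ b. -/
/-- The Fermat–Torricelli set of a finite tuple of points: the set of points minimizing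
the sum of distances to the given points. -/
noncomputable def ftSet {X : Type*} [NormedAddCommGroup X] {n : ℕ} (x : Fin n → X) : Set X :=
  {p | ∀ q : X, ∑ i, ‖p - x i‖ ≤ ∑ i, ‖q - x i‖}

/-- A unit vector is of the first type if it is an interior point of a flattening of the
unit sphere: it lies in the open segment between two distinct unit vectors whose closed
segment is contained in the unit sphere. -/
def FirstType {X : Type*} [NormedAddCommGroup X] [NormedSpace ℝ X] (x : X) : Prop :=
  ‖x‖ = 1 ∧ ∃ u v : X, u ≠ v ∧ ‖u‖ = 1 ∧ ‖v‖ = 1 ∧ x ∈ openSegment ℝ u v ∧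
    ∀ z ∈ segment ℝ u v, ‖z‖ = 1

/-- A unit vector is of the zero type if it is not of the first type. -/
def ZeroType {X : Type*} [NormedAddCommGroup X] [NormedSpace ℝ X] (x : X) : Prop :=
  ‖x‖ = 1 ∧ ¬ FirstType x

/-- φ is a norming functional for x : ‖φ‖ = 1 and φ(x) = ‖x‖. -/
def IsNorming {X : Type*} [NormedAddCommGroup X] [NormedSpace ℝ X]
    (φ : X →L[ℝ] ℝ) (x : X) : Prop :=
  ‖φ‖ = 1 ∧ φ x = ‖x‖

open Module Set

section Aux
variable {X : Type*} [NormedAddCommGroup X] [NormedSpace ℝ X]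

lemma phi_le_norm (φ : X →L[ℝ] ℝ) (hφ : ‖φ‖ = 1) (y : X) : φ y ≤ ‖y‖ := by
  calc φ y ≤ |φ y| := le_abs_self _
    _ ≤ ‖φ‖ * ‖y‖ := by simpa [Real.norm_eq_abs] using φ.le_opNorm y
    _ = ‖y‖ := by rw [hφ, one_mul]

lemma flat_aux (hdim : Module.finrank ℝ X = 2) {x : X} (hx : FirstType x)
    {φ : X →L[ℝ] ℝ} (hφ : IsNorming φ x) {w : X} (hw : φ w = 0) :
    ∃ ε > 0, ∀ l : ℝ, 0 ≤ l → l ≤ ε → ‖x + l • w‖ = 1 := by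
  obtain ⟨hx1, u, v, huv, hu, hv, hxseg, hseg⟩ := hx
  obtain ⟨a, b, ha, hb, hab, hxa⟩ := hxseg
  have hφx : φ x = 1 := by rw [hφ.2, hx1]
  have hφu : φ u ≤ 1 := by simpa [hu] using phi_le_norm φ hφ.1 u
  have hφv : φ v ≤ 1 := by simpa [hv] using phi_le_norm φ hφ.1 v
  have he : a * φ u + b * φ v = 1 := by
    have : φ (a • u + b • v) = 1 := by rw [hxa, hφx]
    simpa [map_add, map_smul, smul_eq_mul] using this
  have hφu1 : φ u = 1 := by nlinarith
  have hφv1 : φ v = 1 := by nlinarith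
  haveI : FiniteDimensional ℝ X := .of_finrank_pos (by rw [hdim]; norm_num)
  set ψ := (φ : X →ₗ[ℝ] ℝ) with hψ
  have hsurj : Function.Surjective ψ := by
    intro r; exact ⟨r • x, by simp [hψ, hφx]⟩
  have hker : finrank ℝ (LinearMap.ker ψ) = 1 := by
    have hrn := ψ.finrank_range_add_finrank_ker
    rw [LinearMap.range_eq_top.2 hsurj, finrank_top, hdim, finrank_self] at hrn
    omega
  have hvu : v - u ≠ 0 := sub_ne_zero.2 huv.symm
  have hspan : (ℝ ∙ (v - u)) = LinearMap.ker ψ := by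
    apply Submodule.eq_of_le_of_finrank_eq
    · rw [Submodule.span_singleton_le_iff_mem]
      simp [LinearMap.mem_ker, hψ, hφu1, hφv1]
    · rw [finrank_span_singleton hvu, hker]
  have hwmem : w ∈ (ℝ ∙ (v - u)) := by
    rw [hspan]; simpa [LinearMap.mem_ker, hψ] using hw
  obtain ⟨μ, hμ⟩ := Submodule.mem_span_singleton.1 hwmem
  refine ⟨min a b / (|μ| + 1), by positivity, fun l hl0 hl => ?_⟩
  have hlμ : |l * μ| ≤ min a b := by
    rw [abs_mul, abs_of_nonneg hl0]
    calc l * |μ| ≤ (min a b / (|μ| + 1)) * (|μ| + 1) :=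
          mul_le_mul hl (by linarith) (abs_nonneg μ) (by positivity)
      _ = min a b := div_mul_cancel₀ _ (by positivity)
  obtain ⟨hlμ1, hlμ2⟩ := abs_le.1 hlμ
  have hmina := min_le_left a b
  have hminb := min_le_right a b
  have key : x + l • w = (a - l * μ) • u + (b + l * μ) • v := by
    rw [← hμ, ← hxa]; module
  rw [key]
  exact hseg _ ⟨a - l * μ, b + l * μ, by linarith, by linarith, by linarith, rfl⟩

lemma norm_sub_smul_eq (hdim : Module.finrank ℝ X = 2) {x : X} (hx : FirstType x)
    {φ : X →L[ℝ] ℝ} (hφ : IsNorming φ x) {y : X} (hy : ‖y‖ = 1) :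
    ∃ ε > 0, ∀ s : ℝ, 0 ≤ s → s ≤ ε → ‖x - s • y‖ = 1 - s * φ y := by
  have hφx : φ x = 1 := by rw [hφ.2, hx.1]
  have hw : φ (φ y • x - y) = 0 := by simp [map_sub, map_smul, smul_eq_mul, hφx]
  obtain ⟨ε₀, hε₀, hflat⟩ := flat_aux hdim hx hφ hw
  have hφy : |φ y| ≤ 1 := by
    rw [← Real.norm_eq_abs]
    calc ‖φ y‖ ≤ ‖φ‖ * ‖y‖ := φ.le_opNorm y
      _ = 1 := by rw [hφ.1, hy, one_mul]
  obtain ⟨hφy1, hφy2⟩ := abs_le.1 hφy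
  refine ⟨min (ε₀ / 2) (1 / 2), by positivity, fun s hs0 hs => ?_⟩
  have hs1 : s ≤ 1 / 2 := le_trans hs (min_le_right _ _)
  have hs2 : s ≤ ε₀ / 2 := le_trans hs (min_le_left _ _)
  have hr : (1 : ℝ) / 2 ≤ 1 - s * φ y := by nlinarith
  have hrpos : (0 : ℝ) < 1 - s * φ y := by linarith
  have hl : s / (1 - s * φ y) ≤ ε₀ := by
    rw [div_le_iff₀ hrpos]; nlinarith
  have hkey : x - s • y = (1 - s * φ y) • (x + (s / (1 - s * φ y)) • (φ y • x - y)) := by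
    rw [smul_add, smul_smul,
      (show (1 - s * φ y) * (s / (1 - s * φ y)) = s by field_simp)]
    module
  rw [hkey, norm_smul, Real.norm_eq_abs, abs_of_pos hrpos,
    hflat _ (div_nonneg hs0 hrpos.le) hl, mul_one]

end Aux

/-- Second non-uniqueness condition: if there is a consistent triple consisting of two
first-type elements and one zero-type element of the unit circle (the support line at the
zero-type element touching the circle only there), then there are three points whose
Fermat–Torricelli set is a non-degenerate segment. -/
theorem ft_segment_of_second_condition
    {X : Type*} [NormedAddCommGroup X] [NormedSpace ℝ X]
    (hdim : Module.finrank ℝ X = 2)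
    (x₁ x₂ x₃ : X) (hx₁ : FirstType x₁) (hx₂ : FirstType x₂) (hx₃ : ZeroType x₃)
    (φ₁ φ₂ φ₃ : X →L[ℝ] ℝ)
    (hφ₁ : IsNorming φ₁ x₁) (hφ₂ : IsNorming φ₂ x₂) (hφ₃ : IsNorming φ₃ x₃)
    (hsum : φ₁ + φ₂ + φ₃ = 0)
    (huniq : ∀ y : X, ‖y‖ = 1 → φ₃ y = 1 → y = x₃) :
    ∃ y₁ y₂ y₃ a b : X, a ≠ b ∧ ftSet ![y₁, y₂, y₃] = segment ℝ a b := by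
  have hn₁ : ‖x₁‖ = 1 := hx₁.1
  have hn₂ : ‖x₂‖ = 1 := hx₂.1
  have hn₃ : ‖x₃‖ = 1 := hx₃.1
  have hφx₁ : φ₁ x₁ = 1 := by rw [hφ₁.2, hn₁]
  have hφx₂ : φ₂ x₂ = 1 := by rw [hφ₂.2, hn₂]
  have hφx₃ : φ₃ x₃ = 1 := by rw [hφ₃.2, hn₃]
  set f : X → ℝ := fun p => ‖p - x₁‖ + ‖p - x₂‖ + ‖p - x₃‖ with hfdef
  have hsum0 : ∀ q : X, φ₁ q + φ₂ q + φ₃ q = 0 := by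
    intro q
    have := congrFun (congrArg (DFunLike.coe) hsum) q
    simpa using this
  have hb₁ : ∀ q : X, 1 - φ₁ q ≤ ‖q - x₁‖ := by
    intro q
    have h := phi_le_norm φ₁ hφ₁.1 (x₁ - q)
    rw [map_sub, hφx₁] at h
    rwa [norm_sub_rev] at h
  have hb₂ : ∀ q : X, 1 - φ₂ q ≤ ‖q - x₂‖ := by
    intro q
    have h := phi_le_norm φ₂ hφ₂.1 (x₂ - q)
    rw [map_sub, hφx₂] at h
    rwa [norm_sub_rev] at h
  have hb₃ : ∀ q : X, 1 - φ₃ q ≤ ‖q - x₃‖ := by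
    intro q
    have h := phi_le_norm φ₃ hφ₃.1 (x₃ - q)
    rw [map_sub, hφx₃] at h
    rwa [norm_sub_rev] at h
  have hlow : ∀ q : X, 3 ≤ f q := by
    intro q
    have := hsum0 q
    have := hb₁ q; have := hb₂ q; have := hb₃ q
    simp only [hfdef]; linarith
  have hf0 : f 0 = 3 := by
    simp only [hfdef, zero_sub, norm_neg, hn₁, hn₂, hn₃]; norm_num
  have hsum3 : ∀ p : X, ∑ i, ‖p - ![x₁, x₂, x₃] i‖ = f p := by
    intro p; simp [Fin.sum_univ_three, hfdef]
  have hft : ftSet ![x₁, x₂, x₃] = {p | f p ≤ 3} := by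
    ext p
    simp only [ftSet, Set.mem_setOf_eq, hsum3]
    constructor
    · intro h
      have := h 0
      rw [hf0] at this
      exact this
    · intro h q
      exact h.trans (hlow q)
  -- the flat estimates
  obtain ⟨ε₁, hε₁, he₁⟩ := norm_sub_smul_eq hdim hx₁ hφ₁ hn₃
  obtain ⟨ε₂, hε₂, he₂⟩ := norm_sub_smul_eq hdim hx₂ hφ₂ hn₃
  set s₀ : ℝ := min (min ε₁ ε₂) 1 / 2 with hs₀def
  have hs₀pos : 0 < s₀ := by positivity
  have hs₀ε₁ : s₀ ≤ ε₁ := by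
    have h1 := min_le_left (min ε₁ ε₂) 1
    have h2 := min_le_left ε₁ ε₂
    simp only [hs₀def]; linarith
  have hs₀ε₂ : s₀ ≤ ε₂ := by
    have h1 := min_le_left (min ε₁ ε₂) 1
    have h2 := min_le_right ε₁ ε₂
    simp only [hs₀def]; linarith
  have hs₀1 : s₀ ≤ 1 := by
    have h1 := min_le_right (min ε₁ ε₂) 1
    simp only [hs₀def]; linarith
  have hfs₀ : f (s₀ • x₃) = 3 := by
    have t1 : ‖s₀ • x₃ - x₁‖ = 1 - s₀ * φ₁ x₃ := by
      rw [norm_sub_rev]; exact he₁ s₀ hs₀pos.le hs₀ε₁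
    have t2 : ‖s₀ • x₃ - x₂‖ = 1 - s₀ * φ₂ x₃ := by
      rw [norm_sub_rev]; exact he₂ s₀ hs₀pos.le hs₀ε₂
    have t3 : ‖s₀ • x₃ - x₃‖ = 1 - s₀ := by
      have : s₀ • x₃ - x₃ = (s₀ - 1) • x₃ := by rw [sub_smul, one_smul]
      rw [this, norm_smul, Real.norm_eq_abs, hn₃, mul_one,
        abs_of_nonpos (by linarith), neg_sub]
    have h12 : φ₁ x₃ + φ₂ x₃ = -1 := by
      have := hsum0 x₃; linarith
    simp only [hfdef, t1, t2, t3]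
    linear_combination (-s₀) * h12
  -- the FT set lies on the line through 0 and x₃
  have hline : ∀ p : X, f p ≤ 3 → ∃ s : ℝ, p = s • x₃ := by
    intro p hp
    have heq : ‖p - x₃‖ = 1 - φ₃ p := by
      have h1 := hb₁ p; have h2 := hb₂ p; have h3 := hb₃ p
      have h0 := hsum0 p
      simp only [hfdef] at hp
      linarith
    by_cases hpx : p = x₃
    · exact ⟨1, by rw [hpx, one_smul]⟩
    · have hd : (0 : ℝ) < ‖x₃ - p‖ := by
        rw [norm_pos_iff]; exact sub_ne_zero.2 (Ne.symm hpx)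
      set d : ℝ := ‖x₃ - p‖ with hddef
      have hφd : φ₃ (x₃ - p) = d := by
        rw [map_sub, hφx₃, hddef, norm_sub_rev]; linarith [heq]
      have hy : ‖d⁻¹ • (x₃ - p)‖ = 1 := by
        rw [norm_smul, Real.norm_eq_abs, abs_of_pos (inv_pos.2 hd), ← hddef,
          inv_mul_cancel₀ hd.ne']
      have hφy : φ₃ (d⁻¹ • (x₃ - p)) = 1 := by
        rw [map_smul, smul_eq_mul, hφd, inv_mul_cancel₀ hd.ne']
      have hyx : d⁻¹ • (x₃ - p) = x₃ := huniq _ hy hφy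
      have hxp : x₃ - p = d • x₃ := by
        have h' := congrArg (fun z : X => d • z) hyx
        simpa [smul_smul, mul_inv_cancel₀ hd.ne'] using h'
      refine ⟨1 - d, ?_⟩
      rw [sub_smul, one_smul, ← hxp]
      abel
  -- the interval
  set I : Set ℝ := {s : ℝ | f (s • x₃) ≤ 3} with hIdef
  have hI0 : (0 : ℝ) ∈ I := by
    simp only [hIdef, Set.mem_setOf_eq, zero_smul, hf0, le_refl]
  have hIs₀ : s₀ ∈ I := by
    simp only [hIdef, Set.mem_setOf_eq, hfs₀, le_refl]
  have hconvf : ∀ (a b : ℝ) (p q : X), 0 ≤ a → 0 ≤ b → a + b = 1 →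
      f (a • p + b • q) ≤ a * f p + b * f q := by
    intro a b p q ha hb hab
    have hterm : ∀ z : X, ‖a • p + b • q - z‖ ≤ a * ‖p - z‖ + b * ‖q - z‖ := by
      intro z
      have hz : a • p + b • q - z = a • (p - z) + b • (q - z) + (a + b - 1) • z := by
        module
      rw [hz, hab]
      simp only [sub_self, zero_smul, add_zero]
      calc ‖a • (p - z) + b • (q - z)‖ ≤ ‖a • (p - z)‖ + ‖b • (q - z)‖ := norm_add_le _ _
        _ = a * ‖p - z‖ + b * ‖q - z‖ := by
            rw [norm_smul, norm_smul, Real.norm_eq_abs, Real.norm_eq_abs,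
              abs_of_nonneg ha, abs_of_nonneg hb]
    have := hterm x₁; have := hterm x₂; have := hterm x₃
    simp only [hfdef]; linarith
  have hIconv : Convex ℝ I := by
    intro s hs t ht a b ha hb hab
    simp only [hIdef, Set.mem_setOf_eq] at hs ht ⊢
    have hsm : (a • s + b • t) • x₃ = a • (s • x₃) + b • (t • x₃) := by
      simp only [smul_eq_mul]; module
    rw [hsm]
    calc f (a • (s • x₃) + b • (t • x₃)) ≤ a * f (s • x₃) + b * f (t • x₃) :=
          hconvf a b _ _ ha hb hab
      _ ≤ a * 3 + b * 3 := add_le_add (mul_le_mul_of_nonneg_left hs ha)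
          (mul_le_mul_of_nonneg_left ht hb)
      _ = 3 := by linarith
  have hIclosed : IsClosed I := by
    have hcont : Continuous fun s : ℝ => f (s • x₃) := by
      simp only [hfdef]
      fun_prop
    exact IsClosed.preimage hcont isClosed_Iic
  have hIbdd : I ⊆ Icc (-4 : ℝ) 4 := by
    intro s hs
    simp only [hIdef, Set.mem_setOf_eq, hfdef] at hs
    have h1 : ‖s • x₃ - x₁‖ ≤ 3 := by
      have := norm_nonneg (s • x₃ - x₂); have := norm_nonneg (s • x₃ - x₃); linarith
    have h2 : ‖s • x₃‖ - ‖x₁‖ ≤ ‖s • x₃ - x₁‖ := norm_sub_norm_le _ _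
    have h3 : ‖s • x₃‖ = |s| := by rw [norm_smul, Real.norm_eq_abs, hn₃, mul_one]
    have : |s| ≤ 4 := by rw [← h3]; linarith [hn₁]
    exact abs_le.1 this
  have hIcpt : IsCompact I := isCompact_Icc.of_isClosed_subset hIclosed hIbdd
  have hne : I.Nonempty := ⟨0, hI0⟩
  set α : ℝ := sInf I with hαdef
  set β : ℝ := sSup I with hβdef
  have hα : α ∈ I := hIcpt.sInf_mem hne
  have hβ : β ∈ I := hIcpt.sSup_mem hne
  have hα0 : α ≤ 0 := csInf_le hIcpt.bddBelow hI0
  have hβs₀ : s₀ ≤ β := le_csSup hIcpt.bddAbove hIs₀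
  have hαβ : α < β := lt_of_le_of_lt hα0 (lt_of_lt_of_le hs₀pos hβs₀)
  have hIcc : I = Icc α β := by
    apply Set.Subset.antisymm
    · intro s hs
      exact ⟨csInf_le hIcpt.bddBelow hs, le_csSup hIcpt.bddAbove hs⟩
    · exact hIconv.ordConnected.out hα hβ
  have hx₃ne : x₃ ≠ 0 := by
    intro h; rw [h, norm_zero] at hn₃; norm_num at hn₃
  refine ⟨x₁, x₂, x₃, α • x₃, β • x₃, ?_, ?_⟩
  · intro h
    have : (α - β) • x₃ = 0 := by rw [sub_smul, h, sub_self]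
    rcases smul_eq_zero.1 this with h' | h'
    · exact hαβ.ne (by linarith [sub_eq_zero.1 h'])
    · exact hx₃ne h'
  · rw [hft]
    ext p
    constructor
    · intro hp
      simp only [Set.mem_setOf_eq] at hp
      obtain ⟨s, rfl⟩ := hline p hp
      have hsI : s ∈ I := hp
      rw [hIcc, ← segment_eq_Icc hαβ.le] at hsI
      obtain ⟨a, b, ha, hb, hab, hs⟩ := hsI
      refine ⟨a, b, ha, hb, hab, ?_⟩
      rw [smul_smul, smul_smul, ← add_smul]
      simp only [smul_eq_mul] at hs
      rw [hs]
    · intro hp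
      obtain ⟨a, b, ha, hb, hab, hs⟩ := hp
      have hps : p = (a * α + b * β) • x₃ := by
        rw [← hs, smul_smul, smul_smul, ← add_smul]
      have hmem : a * α + b * β ∈ I := by
        rw [hIcc, ← segment_eq_Icc hαβ.le]
        exact ⟨a, b, ha, hb, hab, by simp [smul_eq_mul]⟩
      show f p ≤ 3
      rw [hps]
      exact hmem
end

section
/- Let X be a normed plane. The Fermat–Torricelli set ft(x₁, x₂, x₃) is a singleton for every triple of points x₁, x₂, x₃ ∈ X if and only if X satisfies none of the three non-uniqueness conditions: (1) there exist unit vectors x₁, x₂, x₃, each of the first type, and norming functionals φᵢ for xᵢ with φ₁ + φ₂ + φ₃ = 0; (2) there exist unit vectors x₁, x₂ of the first type and x₃ of the zero type, and norming functionals φᵢ for xᵢ with φ₁ + φ₂ + φ₃ = 0 such that x₃ is the only unit vector y with φ₃(y) = 1; (3) there exist a unit vector x₃ of the first type and unit vectors x₁, x₂ of the zero type with x₂ = −x₁, and norming functionals φᵢ for xᵢ with φ₁ + φ₂ + φ₃ = 0 such that for i = 1, 2, xᵢ is the only unit vector y with φᵢ(y) = 1. -/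
/-- First non-uniqueness condition: a consistent triple of three first-type elements. -/
def FirstCondition (X : Type*) [NormedAddCommGroup X] [NormedSpace ℝ X] : Prop :=
  ∃ (x₁ x₂ x₃ : X) (φ₁ φ₂ φ₃ : X →L[ℝ] ℝ),
    FirstType x₁ ∧ FirstType x₂ ∧ FirstType x₃ ∧
    IsNorming φ₁ x₁ ∧ IsNorming φ₂ x₂ ∧ IsNorming φ₃ x₃ ∧ φ₁ + φ₂ + φ₃ = 0

/-- Second non-uniqueness condition: a consistent triple of two first-type elements and
one zero-type element whose support line meets the unit circle only at that element. -/
def SecondCondition (X : Type*) [NormedAddCommGroup X] [NormedSpace ℝ X] : Prop :=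
  ∃ (x₁ x₂ x₃ : X) (φ₁ φ₂ φ₃ : X →L[ℝ] ℝ),
    FirstType x₁ ∧ FirstType x₂ ∧ ZeroType x₃ ∧
    IsNorming φ₁ x₁ ∧ IsNorming φ₂ x₂ ∧ IsNorming φ₃ x₃ ∧ φ₁ + φ₂ + φ₃ = 0 ∧
    (∀ y : X, ‖y‖ = 1 → φ₃ y = 1 → y = x₃)

/-- Third non-uniqueness condition: a consistent triple of one first-type element and two
antipodal zero-type elements whose support lines meet the unit circle only at those
elements. -/
def ThirdCondition (X : Type*) [NormedAddCommGroup X] [NormedSpace ℝ X] : Prop :=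
  ∃ (x₁ x₂ x₃ : X) (φ₁ φ₂ φ₃ : X →L[ℝ] ℝ),
    ZeroType x₁ ∧ ZeroType x₂ ∧ x₂ = -x₁ ∧ FirstType x₃ ∧
    IsNorming φ₁ x₁ ∧ IsNorming φ₂ x₂ ∧ IsNorming φ₃ x₃ ∧ φ₁ + φ₂ + φ₃ = 0 ∧
    (∀ y : X, ‖y‖ = 1 → φ₁ y = 1 → y = x₁) ∧
    (∀ y : X, ‖y‖ = 1 → φ₂ y = 1 → y = x₂)

open Filter Topology Module

section FermatTorricelliSet

variable {X : Type*} [NormedAddCommGroup X]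

theorem mem_ftSet_iff {n : ℕ} {x : Fin n → X} {p : X} :
    p ∈ ftSet x ↔ ∀ q : X, ∑ i, ‖x i - p‖ ≤ ∑ i, ‖x i - q‖ := by
  simp only [ftSet, Set.mem_ofPred_eq, norm_sub_rev (x _)]

theorem ftSet_nonempty [ProperSpace X] {n : ℕ} [NeZero n] (x : Fin n → X) :
    (ftSet x).Nonempty := by
  have hcoercive : Tendsto (fun p => ∑ i, ‖p - x i‖) (cocompact X) atTop := by
    refine tendsto_atTop_mono (fun p => ?_)
      (tendsto_atTop_add_const_right _ (-‖x 0‖) tendsto_norm_cocompact_atTop)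
    calc ‖p‖ + -‖x 0‖ ≤ ‖p - x 0‖ := by rw [← sub_eq_add_neg]; exact norm_sub_norm_le _ _
      _ ≤ ∑ i, ‖p - x i‖ :=
        Finset.single_le_sum (f := fun i => ‖p - x i‖) (fun _ _ => norm_nonneg _)
          (Finset.mem_univ 0)
  exact Continuous.exists_forall_le (by fun_prop) hcoercive

end FermatTorricelliSet

section NormingFunctionals

variable {X : Type*} [NormedAddCommGroup X] [NormedSpace ℝ X] {φ : X →L[ℝ] ℝ}

def Exposes (φ : X →L[ℝ] ℝ) (x : X) : Prop :=
  ∀ y : X, ‖y‖ = 1 → φ y = 1 → y = x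

theorem apply_le_norm_of_norm_le_one (hφ : ‖φ‖ ≤ 1) (v : X) : φ v ≤ ‖v‖ :=
  (Real.le_norm_self _).trans ((φ.le_opNorm v).trans (mul_le_of_le_one_left (norm_nonneg v) hφ))

theorem apply_add_eq_norm (hφ : ‖φ‖ ≤ 1) {a b : X} (ha : φ a = ‖a‖) (hb : φ b = ‖b‖) :
    φ (a + b) = ‖a + b‖ :=
  (apply_le_norm_of_norm_le_one hφ _).antisymm (by rw [map_add, ha, hb]; exact norm_add_le a b)

theorem apply_smul_eq_norm {a : X} (ha : φ a = ‖a‖) {s : ℝ} (hs : 0 ≤ s) :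
    φ (s • a) = ‖s • a‖ := by
  rw [map_smul, ha, norm_smul, Real.norm_of_nonneg hs, smul_eq_mul]

theorem norm_inv_norm_smul {v : X} (hv : v ≠ 0) : ‖‖v‖⁻¹ • v‖ = 1 := by
  rw [norm_smul, norm_inv, norm_norm, inv_mul_cancel₀ (norm_ne_zero_iff.2 hv)]

theorem IsNorming.apply_eq_one {x : X} (h : IsNorming φ x) (hx : ‖x‖ = 1) : φ x = 1 :=
  h.2.trans hx

theorem isNorming_inv_norm_smul_of_apply_eq_norm (hφ : ‖φ‖ ≤ 1) {v : X} (hv : v ≠ 0)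
    (h : φ v = ‖v‖) : IsNorming φ (‖v‖⁻¹ • v) := by
  have hunit : ‖‖v‖⁻¹ • v‖ = 1 := norm_inv_norm_smul hv
  have hone : φ (‖v‖⁻¹ • v) = 1 := by
    rw [map_smul, h, smul_eq_mul, inv_mul_cancel₀ (norm_ne_zero_iff.2 hv)]
  refine ⟨hφ.antisymm ?_, hone.trans hunit.symm⟩
  simpa [hone, hunit] using φ.le_opNorm (‖v‖⁻¹ • v)

theorem Exposes.eq_norm_smul {x : X} (h : Exposes φ x) {v : X} (hv : φ v = ‖v‖) :
    v = ‖v‖ • x := by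
  rcases eq_or_ne v 0 with rfl | hv0
  · simp
  have hone : φ (‖v‖⁻¹ • v) = 1 := by
    rw [map_smul, hv, smul_eq_mul, inv_mul_cancel₀ (norm_ne_zero_iff.2 hv0)]
  rw [← h _ (norm_inv_norm_smul hv0) hone, smul_inv_smul₀ (norm_ne_zero_iff.2 hv0)]

theorem apply_eq_one_of_mem_openSegment (hφ : ‖φ‖ ≤ 1) {u v x : X} (hu : ‖u‖ = 1)
    (hv : ‖v‖ = 1) (hx : x ∈ openSegment ℝ u v) (hφx : φ x = 1) : φ u = 1 ∧ φ v = 1 := by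
  obtain ⟨a, b, ha, hb, hab, rfl⟩ := hx
  have hφu := apply_le_norm_of_norm_le_one hφ u
  have hφv := apply_le_norm_of_norm_le_one hφ v
  rw [map_add, map_smul, map_smul, smul_eq_mul, smul_eq_mul] at hφx
  rw [hu] at hφu; rw [hv] at hφv
  constructor <;> nlinarith

theorem FirstType.not_exposes {x : X} (hx : FirstType x) (hφ : IsNorming φ x) :
    ¬ Exposes φ x := by
  obtain ⟨hx1, u, v, huv, hu, hv, hxuv, -⟩ := hx
  obtain ⟨hφu, hφv⟩ := apply_eq_one_of_mem_openSegment hφ.1.le hu hv hxuv (hφ.apply_eq_one hx1)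
  exact fun h => huv ((h u hu hφu).trans (h v hv hφv).symm)

theorem apply_eq_one_and_norm_eq_one_of_mem_segment (hφ : ‖φ‖ ≤ 1) {x y : X}
    (hx : ‖x‖ = 1) (hy : ‖y‖ = 1) (hφx : φ x = 1) (hφy : φ y = 1) {z : X}
    (hz : z ∈ segment ℝ x y) : φ z = 1 ∧ ‖z‖ = 1 := by
  obtain ⟨θ, μ, hθ, hμ, hθμ, rfl⟩ := hz
  have hφz : φ (θ • x + μ • y) = 1 := by simp [hφx, hφy, hθμ]
  refine ⟨hφz, ?_⟩
  rw [← apply_add_eq_norm hφ (apply_smul_eq_norm (hφx.trans hx.symm) hθ)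
    (apply_smul_eq_norm (hφy.trans hy.symm) hμ), hφz]

theorem firstType_and_isNorming_midpoint (hφ : ‖φ‖ ≤ 1) {x y : X} (hx : ‖x‖ = 1)
    (hy : ‖y‖ = 1) (hφx : φ x = 1) (hφy : φ y = 1) (hxy : x ≠ y) :
    FirstType (midpoint ℝ x y) ∧ IsNorming φ (midpoint ℝ x y) := by
  have hseg := fun z => apply_eq_one_and_norm_eq_one_of_mem_segment hφ hx hy hφx hφy (z := z)
  obtain ⟨hφm, hm⟩ := hseg _ (midpoint_mem_segment x y)
  have hφ1 : ‖φ‖ = 1 := hφ.antisymm (by simpa [hφx, hx] using φ.le_opNorm x)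
  exact ⟨⟨hm, x, y, hxy, hx, hy, midpoint_mem_openSegment x y, fun z hz => (hseg z hz).2⟩,
    hφ1, hφm.trans hm.symm⟩

end NormingFunctionals

section Certificates

variable {X : Type*} [NormedAddCommGroup X] [NormedSpace ℝ X]

theorem exists_linearMap_le_sum_norm {ι : Type*} [Fintype ι] {w : ι → X}
    (hw : ∀ h : X, ∑ i, ‖w i‖ ≤ ∑ i, ‖w i + h‖) :
    ∃ g : (ι → X) →ₗ[ℝ] ℝ, (∀ y, g y ≤ ∑ i, ‖y i‖) ∧ (∀ h : X, g (fun _ => h) = 0) ∧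
      g w = ∑ i, ‖w i‖ := by
  let N : (ι → X) → ℝ := fun y => ∑ i, ‖y i‖
  have hN0 : ∀ y, 0 ≤ N y := fun y => by positivity
  let Δ : X →ₗ[ℝ] ι → X := LinearMap.pi fun _ => LinearMap.id
  by_cases hwΔ : w ∈ LinearMap.range Δ
  · obtain ⟨h, rfl⟩ := hwΔ
    refine ⟨0, hN0, fun _ => rfl, (le_antisymm ?_ (hN0 _)).symm⟩
    simpa [Δ, N] using hw (-h)
  let f₀ : (ι → X) →ₗ.[ℝ] ℝ := ⟨LinearMap.range Δ, 0⟩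
  let f := f₀.supSpanSingleton w (N w) hwΔ
  have hmem : ∀ (h : X) (c : ℝ), Δ h + c • w ∈ f.domain := fun h c =>
    Submodule.mem_sup.2 ⟨_, ⟨h, rfl⟩, _, Submodule.mem_span_singleton.2 ⟨c, rfl⟩, rfl⟩
  have hf : ∀ (h : X) (c : ℝ), f ⟨Δ h + c • w, hmem h c⟩ = c * N w := fun h c =>
    (f₀.supSpanSingleton_apply_mk w (N w) hwΔ (Δ h) ⟨h, rfl⟩ c).trans (by simp [f₀])
  obtain ⟨g, hgf, hgN⟩ := exists_extension_of_le_sublinear f N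
    (fun c hc y => by simp [N, norm_smul, abs_of_pos hc, Finset.mul_sum])
    (fun y z => by simpa [N, ← Finset.sum_add_distrib] using
      Finset.sum_le_sum fun i _ => norm_add_le (y i) (z i))
    (by
      rintro ⟨z, hz⟩
      obtain ⟨_, ⟨h, rfl⟩, _, hc, rfl⟩ := Submodule.mem_sup.1 hz
      obtain ⟨c, rfl⟩ := Submodule.mem_span_singleton.1 hc
      rw [hf]
      rcases le_or_gt c 0 with hc0 | hc0
      · exact (mul_nonpos_of_nonpos_of_nonneg hc0 (hN0 w)).trans (hN0 _)
      · calc c * N w ≤ c * N (w + Δ (c⁻¹ • h)) := by gcongr; exact hw _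
          _ = N (Δ h + c • w) := by
            simp only [N, Finset.mul_sum]
            refine Finset.sum_congr rfl fun i _ => ?_
            simp only [Δ, Pi.add_apply, Pi.smul_apply, LinearMap.pi_apply, LinearMap.id_apply]
            rw [← norm_smul_of_nonneg hc0.le, smul_add, smul_inv_smul₀ hc0.ne', add_comm])
  have hg : ∀ (h : X) (c : ℝ), g (Δ h + c • w) = c * N w := fun h c =>
    (hgf ⟨_, hmem h c⟩).trans (hf h c)
  refine ⟨g, hgN, fun h => ?_, by simpa [N] using hg 0 1⟩
  have := hg h 0
  rwa [zero_smul, add_zero, zero_mul] at this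

theorem exists_norming_family {ι : Type*} [Fintype ι] [DecidableEq ι] {w : ι → X}
    (hw : ∀ h : X, ∑ i, ‖w i‖ ≤ ∑ i, ‖w i + h‖) :
    ∃ φ : ι → X →L[ℝ] ℝ, (∀ i, ‖φ i‖ ≤ 1) ∧ ∑ i, φ i = 0 ∧ ∀ i, φ i (w i) = ‖w i‖ := by
  obtain ⟨g, hgN, hgΔ, hgw⟩ := exists_linearMap_le_sum_norm hw
  have hg : ∀ i (y : X), g (Pi.single i y) ≤ ‖y‖ := fun i y => by
    simpa [Pi.single_apply, apply_ite] using hgN (Pi.single i y)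
  let φ (i : ι) : X →L[ℝ] ℝ :=
    (g ∘ₗ LinearMap.single ℝ (fun _ => X) i).mkContinuous 1 fun y => by
      have := hg i (-y)
      rw [Pi.single_neg, map_neg, norm_neg] at this
      simpa [abs_le] using ⟨by linarith, hg i y⟩
  have hφ : ∀ i y, φ i y = g (Pi.single i y) := fun _ _ => rfl
  refine ⟨φ, fun i => LinearMap.mkContinuous_norm_le _ zero_le_one _, ?_, fun i => ?_⟩
  · ext y
    simpa [hφ, ← map_sum, Finset.univ_sum_single] using hgΔ y
  · have hsum : ∑ i, φ i (w i) = ∑ i, ‖w i‖ := by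
      simp [hφ, ← map_sum, Finset.univ_sum_single, hgw]
    exact (Finset.sum_eq_sum_iff_of_le fun i _ => hg i (w i)).1 hsum i (Finset.mem_univ i)

theorem exists_certificate_of_mem_ftSet {n : ℕ} {x : Fin n → X} {p : X}
    (hp : p ∈ ftSet x) :
    ∃ φ : Fin n → X →L[ℝ] ℝ, (∀ i, ‖φ i‖ ≤ 1) ∧ ∑ i, φ i = 0 ∧
      ∀ i, φ i (x i - p) = ‖x i - p‖ :=
  exists_norming_family fun h => by
    simpa [sub_add] using mem_ftSet_iff.1 hp (p - h)

theorem ftSet_eq_of_certificate {n : ℕ} {x : Fin n → X} {φ : Fin n → X →L[ℝ] ℝ}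
    (hφ : ∀ i, ‖φ i‖ ≤ 1) (hsum : ∑ i, φ i = 0) {p : X}
    (hp : ∀ i, φ i (x i - p) = ‖x i - p‖) :
    ftSet x = {q | ∀ i, φ i (x i - q) = ‖x i - q‖} := by
  have hconst : ∀ q, ∑ i, φ i (x i - q) = ∑ i, φ i (x i) := fun q => by
    have hzero : ∑ i, φ i q = 0 := by simpa using congr($hsum q)
    simp [Finset.sum_sub_distrib, hzero]
  have hle : ∀ q, ∑ i, φ i (x i - q) ≤ ∑ i, ‖x i - q‖ := fun q =>
    Finset.sum_le_sum fun i _ => apply_le_norm_of_norm_le_one (hφ i) _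
  ext q
  rw [mem_ftSet_iff, Set.mem_ofPred_eq]
  constructor
  · intro hq
    refine fun i => (Finset.sum_eq_sum_iff_of_le fun i _ => apply_le_norm_of_norm_le_one (hφ i) _).1
      ((hle q).antisymm ?_) i (Finset.mem_univ i)
    calc ∑ i, ‖x i - q‖ ≤ ∑ i, ‖x i - p‖ := hq p
      _ = ∑ i, φ i (x i - q) := by simp only [← hp, hconst]
  · intro hq r
    calc ∑ i, ‖x i - q‖ = ∑ i, φ i (x i - r) := by
          simp only [← hq, hconst]
      _ ≤ ∑ i, ‖x i - r‖ := hle r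

end Certificates

section Classification

variable {X : Type*} [NormedAddCommGroup X] [NormedSpace ℝ X]

def NormingPointAlong (φ : X →L[ℝ] ℝ) (d y : X) : Prop :=
  IsNorming φ y ∧ (FirstType y ∨ ZeroType y ∧ Exposes φ y ∧ ∃ c : ℝ, d = c • y)

theorem exists_normingPointAlong {φ : X →L[ℝ] ℝ} (hφ : ‖φ‖ ≤ 1) {a b : X}
    (ha : φ a = ‖a‖) (hb : φ b = ‖b‖) (hab : a ≠ b) : ∃ y, NormingPointAlong φ (a - b) y := by
  obtain ⟨v, hv0, hv⟩ : ∃ v, v ≠ 0 ∧ φ v = ‖v‖ := by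
    rcases eq_or_ne a 0 with rfl | ha0
    exacts [⟨b, hab.symm, hb⟩, ⟨a, ha0, ha⟩]
  have hx := isNorming_inv_norm_smul_of_apply_eq_norm hφ hv0 hv
  have hx1 := norm_inv_norm_smul hv0
  by_cases hexp : Exposes φ (‖v‖⁻¹ • v)
  · refine ⟨_, hx, Or.inr ⟨⟨hx1, fun hft => hft.not_exposes hx hexp⟩, hexp, ‖a‖ - ‖b‖, ?_⟩⟩
    rw [sub_smul, ← hexp.eq_norm_smul ha, ← hexp.eq_norm_smul hb]
  · obtain ⟨y, hy1, hφy, hyx⟩ : ∃ y, ‖y‖ = 1 ∧ φ y = 1 ∧ y ≠ ‖v‖⁻¹ • v := by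
      simpa [Exposes] using hexp
    obtain ⟨hft, hnorming⟩ :=
      firstType_and_isNorming_midpoint hφ hx1 hy1 (hx.apply_eq_one hx1) hφy hyx.symm
    exact ⟨_, hnorming, Or.inl hft⟩

theorem eq_neg_of_isNorming_of_smul_eq {φ₁ φ₂ φ₃ : X →L[ℝ] ℝ} (hsum : φ₁ + φ₂ + φ₃ = 0)
    (hφ₃ : ‖φ₃‖ ≤ 1) {y₁ y₂ d : X} (h₁ : IsNorming φ₁ y₁) (h₂ : IsNorming φ₂ y₂)
    (hy₁ : ‖y₁‖ = 1) (hy₂ : ‖y₂‖ = 1) (hd : d ≠ 0) {c₁ c₂ : ℝ} (hc₁ : d = c₁ • y₁)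
    (hc₂ : d = c₂ • y₂) : y₂ = -y₁ := by
  have hc₁0 : c₁ ≠ 0 := by rintro rfl; simp [hc₁] at hd
  have habs : |c₂| = |c₁| := by
    simpa [norm_smul, hy₁, hy₂] using congrArg norm (hc₂.symm.trans hc₁)
  rcases abs_eq_abs.1 habs with rfl | rfl
  · have hy : y₂ = y₁ := smul_right_injective X hc₁0 (hc₂.symm.trans hc₁)
    have h3 : φ₃ y₁ = -2 := by
      have := congr($hsum y₁)
      simp [hy ▸ h₂.apply_eq_one hy₂, h₁.apply_eq_one hy₁] at this
      linarith
    have := apply_le_norm_of_norm_le_one hφ₃ (-y₁)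
    simp [h3, hy₁] at this
  · refine (smul_right_injective X hc₁0 ?_).symm
    simp only [smul_neg, ← hc₁, hc₂, neg_smul, neg_neg]

theorem conditions_of_normingPointAlong {φ₁ φ₂ φ₃ : X →L[ℝ] ℝ} (hsum : φ₁ + φ₂ + φ₃ = 0)
    {d y₁ y₂ y₃ : X} (hd : d ≠ 0) (h₁ : NormingPointAlong φ₁ d y₁)
    (h₂ : NormingPointAlong φ₂ d y₂) (h₃ : NormingPointAlong φ₃ d y₃) :
    FirstCondition X ∨ SecondCondition X ∨ ThirdCondition X := by
  have hsum₁₃₂ : φ₁ + φ₃ + φ₂ = 0 := by rw [← hsum]; abel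
  have hsum₂₃₁ : φ₂ + φ₃ + φ₁ = 0 := by rw [← hsum]; abel
  obtain ⟨n₁, f₁ | ⟨z₁, e₁, c₁, hc₁⟩⟩ := h₁ <;> obtain ⟨n₂, f₂ | ⟨z₂, e₂, c₂, hc₂⟩⟩ := h₂ <;>
    obtain ⟨n₃, f₃ | ⟨z₃, e₃, c₃, hc₃⟩⟩ := h₃
  · exact .inl ⟨_, _, _, _, _, _, f₁, f₂, f₃, n₁, n₂, n₃, hsum⟩
  · exact .inr <| .inl ⟨_, _, _, _, _, _, f₁, f₂, z₃, n₁, n₂, n₃, hsum, e₃⟩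
  · exact .inr <| .inl ⟨_, _, _, _, _, _, f₁, f₃, z₂, n₁, n₃, n₂, hsum₁₃₂, e₂⟩
  · have h₂₃ := eq_neg_of_isNorming_of_smul_eq hsum₂₃₁ n₁.1.le n₂ n₃ z₂.1 z₃.1 hd hc₂ hc₃
    exact .inr <| .inr ⟨_, _, _, _, _, _, z₂, z₃, h₂₃, f₁, n₂, n₃, n₁, hsum₂₃₁, e₂, e₃⟩
  · exact .inr <| .inl ⟨_, _, _, _, _, _, f₂, f₃, z₁, n₂, n₃, n₁, hsum₂₃₁, e₁⟩
  · have h₁₃ := eq_neg_of_isNorming_of_smul_eq hsum₁₃₂ n₂.1.le n₁ n₃ z₁.1 z₃.1 hd hc₁ hc₃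
    exact .inr <| .inr ⟨_, _, _, _, _, _, z₁, z₃, h₁₃, f₂, n₁, n₃, n₂, hsum₁₃₂, e₁, e₃⟩
  · have h₁₂ := eq_neg_of_isNorming_of_smul_eq hsum n₃.1.le n₁ n₂ z₁.1 z₂.1 hd hc₁ hc₂
    exact .inr <| .inr ⟨_, _, _, _, _, _, z₁, z₂, h₁₂, f₃, n₁, n₂, n₃, hsum, e₁, e₂⟩
  · have h₁₂ := eq_neg_of_isNorming_of_smul_eq hsum n₃.1.le n₁ n₂ z₁.1 z₂.1 hd hc₁ hc₂
    have h₁₃ := eq_neg_of_isNorming_of_smul_eq hsum₁₃₂ n₂.1.le n₁ n₃ z₁.1 z₃.1 hd hc₁ hc₃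
    have h₂₃ := eq_neg_of_isNorming_of_smul_eq hsum₂₃₁ n₁.1.le n₂ n₃ z₂.1 z₃.1 hd hc₂ hc₃
    rw [h₁₂, h₁₃, neg_neg] at h₂₃
    have := congrArg φ₁ h₂₃
    rw [map_neg, n₁.apply_eq_one z₁.1] at this
    norm_num at this

theorem conditions_of_ftSet_nontrivial {x : Fin 3 → X} (h : (ftSet x).Nontrivial) :
    FirstCondition X ∨ SecondCondition X ∨ ThirdCondition X := by
  obtain ⟨p, hp, q, hq, hpq⟩ := h
  obtain ⟨φ, hφ, hsum, hpφ⟩ := exists_certificate_of_mem_ftSet hp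
  rw [ftSet_eq_of_certificate hφ hsum hpφ] at hq
  have hy : ∀ i, ∃ y, NormingPointAlong (φ i) (q - p) y := fun i => by
    simpa only [sub_sub_sub_cancel_left] using
      exists_normingPointAlong (hφ i) (hpφ i) (hq i) (by simpa using hpq)
  choose y hy using hy
  exact conditions_of_normingPointAlong (by simpa [Fin.sum_univ_three] using hsum)
    (sub_ne_zero.2 hpq.symm) (hy 0) (hy 1) (hy 2)

end Classification

section Nonuniqueness

variable {X : Type*} [NormedAddCommGroup X] [NormedSpace ℝ X] {φ : X →L[ℝ] ℝ}

/-- In a plane the cone spanned by the endpoints of the flat through `x` is a neighbourhood of `x`,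
and on that cone `φ` agrees with the norm. -/
theorem FirstType.eventually_apply_eq_norm (hdim : finrank ℝ X = 2) {x : X}
    (hx : FirstType x) (hφ : IsNorming φ x) : ∀ᶠ y in 𝓝 x, φ y = ‖y‖ := by
  obtain ⟨hx1, u, v, huv, hu, hv, hxuv, -⟩ := hx
  obtain ⟨hφu, hφv⟩ := apply_eq_one_of_mem_openSegment hφ.1.le hu hv hxuv (hφ.apply_eq_one hx1)
  have : FiniteDimensional ℝ X := .of_finrank_eq_succ hdim
  have hli : LinearIndependent ℝ ![u, v] := by
    refine (LinearIndependent.pair_iff' (by rintro rfl; simp at hφu)).2 fun c hcu => huv ?_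
    have hc : c = 1 := by simpa [← hcu, hφu] using hφv
    rw [← hcu, hc, one_smul]
  let B := basisOfLinearIndependentOfCardEqFinrank hli (by simp [hdim])
  have hB : ⇑B = ![u, v] := coe_basisOfLinearIndependentOfCardEqFinrank hli _
  have hrepr : ∀ y, B.repr y 0 • u + B.repr y 1 • v = y := fun y => by
    simpa [Fin.sum_univ_two, hB] using B.sum_repr y
  have hpos : ∀ i, 0 < B.repr x i → ∀ᶠ y in 𝓝 x, 0 < B.repr y i := fun i hi =>
    ((B.coord i).continuous_of_finiteDimensional.continuousAt).eventually (lt_mem_nhds hi)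
  obtain ⟨a, b, ha, hb, -, rfl⟩ := hxuv
  have hcoord : B.repr (a • u + b • v) = Finsupp.single 0 a + Finsupp.single 1 b := by
    have hB0 : B 0 = u := by simp [hB]
    have hB1 : B 1 = v := by simp [hB]
    simp [← hB0, ← hB1, Basis.repr_self]
  filter_upwards [hpos 0 (by simp [hcoord, ha]), hpos 1 (by simp [hcoord, hb])] with y h0 h1
  rw [← hrepr y]
  exact apply_add_eq_norm hφ.1.le (apply_smul_eq_norm (hφu.trans hu.symm) h0.le)
    (apply_smul_eq_norm (hφv.trans hv.symm) h1.le)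

theorem FirstType.eventually_apply_sub_smul_eq_norm (hdim : finrank ℝ X = 2) {x : X}
    (hx : FirstType x) (hφ : IsNorming φ x) (v : X) :
    ∀ᶠ t in 𝓝 (0 : ℝ), φ (x - t • v) = ‖x - t • v‖ := by
  have hlim : Tendsto (fun t : ℝ => x - t • v) (𝓝 0) (𝓝 x) := by
    have hcont : Continuous fun t : ℝ => x - t • v := by fun_prop
    simpa using hcont.tendsto 0
  exact hlim.eventually (hx.eventually_apply_eq_norm hdim hφ)

theorem IsNorming.eventually_apply_sub_smul_eq_norm {x v : X} (hφ : IsNorming φ x) {c : ℝ}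
    (hv : v = c • x) : ∀ᶠ t in 𝓝 (0 : ℝ), φ (x - t • v) = ‖x - t • v‖ := by
  have hlim : Tendsto (fun t : ℝ => 1 - t * c) (𝓝 0) (𝓝 1) := by
    have hcont : Continuous fun t : ℝ => 1 - t * c := by fun_prop
    simpa using hcont.tendsto 0
  filter_upwards [hlim.eventually (lt_mem_nhds one_pos)] with t ht
  rw [show x - t • v = (1 - t * c) • x by rw [hv]; module]
  exact apply_smul_eq_norm hφ.2 ht.le

theorem ftSet_nontrivial_of_eventually {x₁ x₂ x₃ v : X} {φ₁ φ₂ φ₃ : X →L[ℝ] ℝ}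
    (h₁ : IsNorming φ₁ x₁) (h₂ : IsNorming φ₂ x₂) (h₃ : IsNorming φ₃ x₃)
    (hsum : φ₁ + φ₂ + φ₃ = 0) (hv : v ≠ 0)
    (hev : ∀ᶠ t in 𝓝 (0 : ℝ), φ₁ (x₁ - t • v) = ‖x₁ - t • v‖ ∧
      φ₂ (x₂ - t • v) = ‖x₂ - t • v‖ ∧ φ₃ (x₃ - t • v) = ‖x₃ - t • v‖) :
    (ftSet ![x₁, x₂, x₃]).Nontrivial := by
  have hft := ftSet_eq_of_certificate (x := ![x₁, x₂, x₃]) (φ := ![φ₁, φ₂, φ₃]) (p := 0)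
    (by simp [Fin.forall_fin_succ, h₁.1, h₂.1, h₃.1])
    (by simpa [Fin.sum_univ_three] using hsum)
    (by simp [Fin.forall_fin_succ, h₁.2, h₂.2, h₃.2])
  obtain ⟨t, ht, ht0⟩ := ((hev.filter_mono nhdsWithin_le_nhds).and
    (self_mem_nhdsWithin : ∀ᶠ t in 𝓝[≠] (0 : ℝ), t ≠ 0)).exists
  refine ⟨0, ?_, t • v, ?_, (smul_ne_zero ht0 hv).symm⟩ <;> rw [hft]
  · simp [Fin.forall_fin_succ, h₁.2, h₂.2, h₃.2]
  · simpa [Fin.forall_fin_succ] using ht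

theorem exists_ftSet_nontrivial (hdim : finrank ℝ X = 2)
    (h : FirstCondition X ∨ SecondCondition X ∨ ThirdCondition X) :
    ∃ x₁ x₂ x₃ : X, (ftSet ![x₁, x₂, x₃]).Nontrivial := by
  rcases h with ⟨x₁, x₂, x₃, φ₁, φ₂, φ₃, f₁, f₂, f₃, n₁, n₂, n₃, hsum⟩ |
    ⟨x₁, x₂, x₃, φ₁, φ₂, φ₃, f₁, f₂, z₃, n₁, n₂, n₃, hsum, -⟩ |
    ⟨x₁, x₂, x₃, φ₁, φ₂, φ₃, z₁, z₂, rfl, f₃, n₁, n₂, n₃, hsum, -, -⟩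
  · exact ⟨x₁, x₂, x₃, ftSet_nontrivial_of_eventually n₁ n₂ n₃ hsum (v := x₁)
      (by rintro rfl; simpa using f₁.1)
      ((f₁.eventually_apply_sub_smul_eq_norm hdim n₁ _).and
        ((f₂.eventually_apply_sub_smul_eq_norm hdim n₂ _).and
          (f₃.eventually_apply_sub_smul_eq_norm hdim n₃ _)))⟩
  · exact ⟨x₁, x₂, x₃, ftSet_nontrivial_of_eventually n₁ n₂ n₃ hsum (v := x₃)
      (by rintro rfl; simpa using z₃.1)
      ((f₁.eventually_apply_sub_smul_eq_norm hdim n₁ _).and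
        ((f₂.eventually_apply_sub_smul_eq_norm hdim n₂ _).and
          (n₃.eventually_apply_sub_smul_eq_norm (one_smul ℝ x₃).symm)))⟩
  · exact ⟨x₁, -x₁, x₃, ftSet_nontrivial_of_eventually n₁ n₂ n₃ hsum (v := x₁)
      (by rintro rfl; simpa using z₁.1)
      ((n₁.eventually_apply_sub_smul_eq_norm (one_smul ℝ x₁).symm).and
        ((n₂.eventually_apply_sub_smul_eq_norm (c := -1) (by simp)).and
          (f₃.eventually_apply_sub_smul_eq_norm hdim n₃ _)))⟩

end Nonuniqueness

/-- Uniqueness criterion: in a normed plane the Fermat–Torricelli set is a singleton for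
every triple of points if and only if none of the three non-uniqueness conditions holds. -/
theorem ft_singleton_iff_no_nonuniqueness_condition
    {X : Type*} [NormedAddCommGroup X] [NormedSpace ℝ X]
    (hdim : Module.finrank ℝ X = 2) :
    (∀ x₁ x₂ x₃ : X, ∃ p : X, ftSet ![x₁, x₂, x₃] = {p}) ↔
      (¬ FirstCondition X ∧ ¬ SecondCondition X ∧ ¬ ThirdCondition X) := by
  have : FiniteDimensional ℝ X := .of_finrank_eq_succ hdim
  have hsingleton : ∀ x₁ x₂ x₃ : X,
      (∃ p, ftSet ![x₁, x₂, x₃] = {p}) ↔ ¬ (ftSet ![x₁, x₂, x₃]).Nontrivial := fun _ _ _ => by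
    rw [Set.not_nontrivial_iff, Set.subsingleton_iff_eq_empty_or_singleton,
      or_iff_right (ftSet_nonempty _).ne_empty]
  simp only [hsingleton, ← not_or]
  refine ⟨fun h hc => ?_, fun h x₁ x₂ x₃ hnt => h (conditions_of_ftSet_nontrivial hnt)⟩
  obtain ⟨x₁, x₂, x₃, hnt⟩ := exists_ftSet_nontrivial hdim hc
  exact h x₁ x₂ x₃ hnt
end
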